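/- arXiv:2011.02288 — 2 statements merged into one kernel-verified Lean document; each statement's English description precedes it below -/
import Mathlib

section
/- For every even integer b ≥ 2 and every integer m with 0 ≤ m ≤ b, the number of ±1-step walks of length b starting at 0 whose maximum attained position equals m is given by f(m,b) = C(b, b/2 + (−1)^m · ⌈m/2⌉), where C(n,k) denotes the binomial coefficient. -/
/-- The value of a ±1 step: `true` is a rightward step (+1), `false` a leftward step (−1). -/
def stepVal (x : Bool) : ℤ := if x then 1 else -1

/-- The position after `k` steps (partial sum `S_k`) of the walk with steps `ε`. -/
def partialSum {b : ℕ} (ε : Fin b → Bool) (k : ℕ) : ℤ :=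
  ∑ i : Fin b, if (i : ℕ) < k then stepVal (ε i) else 0

/-- The maximum attained position `max { S_k : 0 ≤ k ≤ b }` of the walk with steps `ε`,
started at 0. -/
def walkMax {b : ℕ} (ε : Fin b → Bool) : ℤ :=
  (Finset.range (b + 1)).sup' Finset.nonempty_range_add_one (partialSum ε)

/-- `f m b` : the number of ±1-step walks of length `b` starting at 0 whose maximum
attained position equals `m`. -/
def f (m : ℤ) (b : ℕ) : ℕ :=
  (Finset.univ.filter (fun ε : Fin b → Bool => walkMax ε = m)).card

/-!
Reflection principle: reversing every step after the first visit to a level `m ≥ 0` shows that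
the walks with maximum at least `m` are those ending at or above `m` together with as many walks
as end strictly above `m`. Taking the difference at `m` and `m + 1` gives
`f m b = #{S_b = m} + #{S_b = m + 1}`. By parity only one term survives, and the walks ending at
`2k - b` are counted by `C(b, k)`; for even `b` the index is `b/2 + ⌈m/2⌉` or, by the symmetry
of binomial coefficients, `b/2 - ⌈m/2⌉`.
-/

open Finset

section Walk

variable {b : ℕ} (ε : Fin b → Bool)

lemma stepVal_not (x : Bool) : stepVal (!x) = -stepVal x := by
  cases x <;> rfl

lemma stepVal_le_one (x : Bool) : stepVal x ≤ 1 := by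
  cases x <;> decide

lemma partialSum_zero : partialSum ε 0 = 0 := by
  simp [partialSum]

lemma partialSum_succ {k : ℕ} (hk : k < b) :
    partialSum ε (k + 1) = partialSum ε k + stepVal (ε ⟨k, hk⟩) := by
  have hstep : stepVal (ε ⟨k, hk⟩) = ∑ i, if i = ⟨k, hk⟩ then stepVal (ε i) else 0 := by simp
  rw [hstep, partialSum, partialSum, ← Finset.sum_add_distrib]
  refine Finset.sum_congr rfl fun i _ => ?_
  have : i = ⟨k, hk⟩ ↔ (i : ℕ) = k := Fin.ext_iff
  split_ifs <;> simp_all <;> omega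

lemma partialSum_of_le {k : ℕ} (hk : b ≤ k) : partialSum ε k = partialSum ε b := by
  simp only [partialSum]
  refine Finset.sum_congr rfl fun i _ => ?_
  rw [if_pos (by omega), if_pos i.isLt]

lemma partialSum_succ_le (k : ℕ) : partialSum ε (k + 1) ≤ partialSum ε k + 1 := by
  rcases lt_or_ge k b with hk | hk
  · rw [partialSum_succ ε hk]
    linarith [stepVal_le_one (ε ⟨k, hk⟩)]
  · rw [partialSum_of_le ε (by omega), partialSum_of_le ε hk]
    omega

lemma partialSum_eq_two_mul_card_sub : partialSum ε b = 2 * #{i | ε i} - b := by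
  have h (i : Fin b) : stepVal (ε i) = 2 * (if ε i then 1 else 0) - 1 := by
    cases ε i <;> rfl
  simp only [partialSum, Fin.is_lt, if_true, h, Finset.sum_sub_distrib, ← Finset.mul_sum,
    Finset.sum_boole]
  simp

/-- Walks climb by at most one per step, so they cannot jump over a level. -/
lemma exists_partialSum_eq_of_le {m : ℤ} (hm : 0 ≤ m) {n : ℕ} (h : m ≤ partialSum ε n) :
    ∃ k ≤ n, partialSum ε k = m := by
  induction n with
  | zero => exact ⟨0, le_rfl, by rw [partialSum_zero] at h ⊢; omega⟩
  | succ n ih =>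
    rcases le_or_gt m (partialSum ε n) with hn | hn
    · obtain ⟨k, hk, hkm⟩ := ih hn
      exact ⟨k, by omega, hkm⟩
    · exact ⟨n + 1, le_rfl, by have := partialSum_succ_le ε n; omega⟩

lemma le_walkMax_iff {m : ℤ} (hm : 0 ≤ m) : m ≤ walkMax ε ↔ ∃ k ≤ b, partialSum ε k = m := by
  simp only [walkMax, Finset.le_sup'_iff, Finset.mem_range, Nat.lt_succ_iff]
  constructor
  · rintro ⟨n, hn, h⟩
    obtain ⟨k, hk, hkm⟩ := exists_partialSum_eq_of_le ε hm h
    exact ⟨k, hk.trans hn, hkm⟩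
  · rintro ⟨k, hk, hkm⟩
    exact ⟨k, hk, hkm.ge⟩

end Walk

def reflectFrom (t : ℕ) {b : ℕ} (ε : Fin b → Bool) : Fin b → Bool :=
  fun i => if (i : ℕ) < t then ε i else !ε i

-- `0` if the walk never visits `m`.
noncomputable def hittingTime (m : ℤ) {b : ℕ} (ε : Fin b → Bool) : ℕ :=
  sInf {k | partialSum ε k = m}

section Reflection

variable {b : ℕ} (ε : Fin b → Bool) (t : ℕ) {m : ℤ}

lemma reflectFrom_reflectFrom : reflectFrom t (reflectFrom t ε) = ε := by
  funext i
  by_cases hi : (i : ℕ) < t <;> simp [reflectFrom, hi]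

lemma partialSum_reflectFrom_of_le {k : ℕ} (hk : k ≤ t) :
    partialSum (reflectFrom t ε) k = partialSum ε k := by
  refine Finset.sum_congr rfl fun i _ => ?_
  by_cases hi : (i : ℕ) < k
  · simp [reflectFrom, hi, show (i : ℕ) < t by omega]
  · simp [hi]

lemma partialSum_reflectFrom_of_ge {k : ℕ} (hk : t ≤ k) :
    partialSum (reflectFrom t ε) k = 2 * partialSum ε t - partialSum ε k := by
  simp only [partialSum, Finset.mul_sum, ← Finset.sum_sub_distrib]
  refine Finset.sum_congr rfl fun i _ => ?_
  by_cases hit : (i : ℕ) < t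
  · simp [reflectFrom, hit, show (i : ℕ) < k by omega]
    ring
  · by_cases hik : (i : ℕ) < k <;> simp [reflectFrom, hit, hik, stepVal_not]

variable {ε}

lemma partialSum_hittingTime (h : ∃ k, partialSum ε k = m) :
    partialSum ε (hittingTime m ε) = m :=
  Nat.sInf_mem h

lemma hittingTime_le {k : ℕ} (hk : partialSum ε k = m) : hittingTime m ε ≤ k :=
  Nat.sInf_le hk

lemma partialSum_ne_of_lt_hittingTime {k : ℕ} (hk : k < hittingTime m ε) :
    partialSum ε k ≠ m :=
  Nat.notMem_of_lt_sInf hk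

lemma hittingTime_reflectFrom_hittingTime (h : ∃ k, partialSum ε k = m) :
    hittingTime m (reflectFrom (hittingTime m ε) ε) = hittingTime m ε := by
  set τ := hittingTime m ε
  have hτ : partialSum (reflectFrom τ ε) τ = m := by
    rw [partialSum_reflectFrom_of_le ε τ le_rfl, partialSum_hittingTime h]
  refine (hittingTime_le hτ).antisymm (not_lt.mp fun hlt => ?_)
  have := partialSum_hittingTime ⟨τ, hτ⟩
  rw [partialSum_reflectFrom_of_le ε τ hlt.le] at this
  exact partialSum_ne_of_lt_hittingTime hlt this

end Reflection

lemma card_filter_eq_add_card_filter_le {α : Type*} [Fintype α] (g : α → ℤ) (m : ℤ) :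
    #{a | g a = m} + #{a | m + 1 ≤ g a} = #{a | m ≤ g a} := by
  classical
  rw [← Finset.card_union_of_disjoint (Finset.disjoint_filter.mpr fun a _ h => by omega)]
  congr 1
  ext a
  simp only [Finset.mem_union, Finset.mem_filter, Finset.mem_univ, true_and]
  omega

section Counting

variable {b : ℕ} {m : ℤ}

/-- The reflection principle: reversing the steps after the first visit to `m` is a bijection
between walks that reach `m` but end below it and walks that end above `m`. -/
lemma card_reflection (hm : 0 ≤ m) :
    #{ε : Fin b → Bool | m ≤ walkMax ε ∧ partialSum ε b < m} =
      #{ε : Fin b → Bool | m + 1 ≤ partialSum ε b} := by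
  have hit_of_mem {ε : Fin b → Bool} (h : m ≤ walkMax ε ∨ m ≤ partialSum ε b) :
      ∃ k, partialSum ε k = m ∧ hittingTime m ε ≤ b := by
    obtain ⟨k, hkb, hkm⟩ : ∃ k ≤ b, partialSum ε k = m :=
      h.elim (le_walkMax_iff ε hm).mp (exists_partialSum_eq_of_le ε hm)
    exact ⟨k, hkm, (hittingTime_le hkm).trans hkb⟩
  refine Finset.card_nbij' (fun ε => reflectFrom (hittingTime m ε) ε)
    (fun ε => reflectFrom (hittingTime m ε) ε) ?_ ?_ ?_ ?_
  all_goals intro ε hε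
  all_goals simp only [Finset.coe_filter, Finset.mem_univ, true_and, Set.mem_ofPred_eq] at hε ⊢
  · obtain ⟨k, hk, hτ⟩ := hit_of_mem (.inl hε.1)
    rw [partialSum_reflectFrom_of_ge ε _ hτ, partialSum_hittingTime ⟨k, hk⟩]
    omega
  · obtain ⟨k, hk, hτ⟩ := hit_of_mem (ε := ε) (.inr (by omega))
    refine ⟨(le_walkMax_iff _ hm).mpr ⟨_, hτ, ?_⟩, ?_⟩
    · rw [partialSum_reflectFrom_of_le ε _ le_rfl, partialSum_hittingTime ⟨k, hk⟩]
    · rw [partialSum_reflectFrom_of_ge ε _ hτ, partialSum_hittingTime ⟨k, hk⟩]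
      omega
  · obtain ⟨k, hk, -⟩ := hit_of_mem (.inl hε.1)
    rw [hittingTime_reflectFrom_hittingTime ⟨k, hk⟩, reflectFrom_reflectFrom]
  · obtain ⟨k, hk, -⟩ := hit_of_mem (ε := ε) (.inr (by omega))
    rw [hittingTime_reflectFrom_hittingTime ⟨k, hk⟩, reflectFrom_reflectFrom]

lemma card_le_walkMax (hm : 0 ≤ m) :
    #{ε : Fin b → Bool | m ≤ walkMax ε} =
      #{ε : Fin b → Bool | m ≤ partialSum ε b} + #{ε : Fin b → Bool | m + 1 ≤ partialSum ε b} := by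
  rw [← card_reflection hm, ← Finset.card_union_of_disjoint
    (Finset.disjoint_filter.mpr fun ε _ h => by omega)]
  congr 1
  ext ε
  have : m ≤ partialSum ε b → m ≤ walkMax ε := fun h =>
    (le_walkMax_iff ε hm).mpr (exists_partialSum_eq_of_le ε hm h)
  simp only [Finset.mem_union, Finset.mem_filter, Finset.mem_univ, true_and]
  grind

lemma f_eq_card_add_card (hm : 0 ≤ m) :
    f m b = #{ε : Fin b → Bool | partialSum ε b = m} +
      #{ε : Fin b → Bool | partialSum ε b = m + 1} := by
  have hmax := card_filter_eq_add_card_filter_le (walkMax (b := b)) m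
  have hmax₀ := card_le_walkMax (b := b) hm
  have hmax₁ := card_le_walkMax (b := b) (m := m + 1) (by omega)
  have hend₀ := card_filter_eq_add_card_filter_le (fun ε : Fin b → Bool => partialSum ε b) m
  have hend₁ := card_filter_eq_add_card_filter_le (fun ε : Fin b → Bool => partialSum ε b) (m + 1)
  rw [f]
  omega

end Counting

section Binomial

variable {b : ℕ}

lemma card_filter_card_filter_eq_choose (k : ℕ) :
    #{ε : Fin b → Bool | #{i | ε i} = k} = b.choose k := by
  rw [show b.choose k = #(Finset.univ.powersetCard k : Finset (Finset (Fin b))) by simp]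
  refine Finset.card_nbij' (fun ε => ({i | ε i} : Finset (Fin b))) (fun s i => i ∈ s) ?_ ?_ ?_ ?_
  all_goals intro x hx
  all_goals simp_all [Finset.mem_powersetCard]

lemma card_partialSum_eq_choose (k : ℕ) :
    #{ε : Fin b → Bool | partialSum ε b = 2 * k - b} = b.choose k := by
  rw [← card_filter_card_filter_eq_choose]
  congr 1
  ext ε
  simp only [Finset.mem_filter, Finset.mem_univ, true_and, partialSum_eq_two_mul_card_sub]
  omega

lemma card_partialSum_eq_of_odd {j : ℤ} (hj : Odd (j + b)) :
    #{ε : Fin b → Bool | partialSum ε b = j} = 0 := by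
  refine Finset.card_eq_zero.mpr (Finset.filter_eq_empty_iff.mpr fun ε _ h => ?_)
  rw [partialSum_eq_two_mul_card_sub] at h
  exact Int.not_even_iff_odd.mpr hj ⟨#{i | ε i}, by omega⟩

lemma f_eq_choose {m : ℤ} (hm : 0 ≤ m) : f m b = b.choose ((m + b + 1) / 2).toNat := by
  rw [f_eq_card_add_card hm]
  rcases Int.even_or_odd (m + b) with ⟨k, hk⟩ | ⟨k, hk⟩
  · rw [card_partialSum_eq_of_odd (j := m + 1) ⟨k, by omega⟩, add_zero,
      show m = 2 * k.toNat - b by omega, card_partialSum_eq_choose]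
    congr
    omega
  · rw [card_partialSum_eq_of_odd ⟨k, hk⟩, zero_add,
      show m + 1 = 2 * (k + 1).toNat - b by omega, card_partialSum_eq_choose]
    congr
    omega

end Binomial

lemma Rat.ceil_intCast_div_two (m : ℤ) : ⌈(m : ℚ) / 2⌉ = (m + 1) / 2 := by
  have := Rat.ceil_intCast_div_natCast m 2
  push_cast at this
  omega

theorem f_closed_form_even_general (b : ℕ) (hbe : Even b)
    (m : ℤ) (hm0 : 0 ≤ m) (hmb : m ≤ (b : ℤ)) :
    (f m b : ℤ) = Nat.choose b (((b : ℤ) / 2 + (m.negOnePow : ℤ) * ⌈(m : ℚ) / 2⌉).toNat) := by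
  obtain ⟨c, rfl⟩ := hbe
  rw [f_eq_choose hm0, Rat.ceil_intCast_div_two]
  rcases Int.even_or_odd' m with ⟨d, rfl | rfl⟩
  · rw [Int.negOnePow_even _ ⟨d, by ring⟩, Units.val_one, one_mul]
    congr 3
    omega
  · rw [Int.negOnePow_odd _ ⟨d, rfl⟩, Units.val_neg, Units.val_one, neg_one_mul]
    apply congrArg
    apply Nat.choose_symm_of_eq_add
    omega

/-- Proposition 2 (even case): for even `b ≥ 2` and `0 ≤ m ≤ b`,
`f(m, b) = C(b, b/2 + (−1)^m ⌈m/2⌉)`. -/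
theorem f_closed_form_even (b : ℕ) (hb : 2 ≤ b) (hbe : Even b)
    (m : ℤ) (hm0 : 0 ≤ m) (hmb : m ≤ (b : ℤ)) :
    (f m b : ℤ) = Nat.choose b (((b : ℤ) / 2 + (m.negOnePow : ℤ) * ⌈(m : ℚ) / 2⌉).toNat) :=
  f_closed_form_even_general b hbe m hm0 hmb
end

section
/- For all positive integers b and k, the expected maximum of a uniformly random ±1-step walk of length kb is at most k times the expected maximum of a uniformly random ±1-step walk of length b; that is, 2^{−kb}·∑_{m=0}^{kb} m·f(m,kb) ≤ k · 2^{−b}·∑_{m=0}^{b} m·f(m,b). (Equivalently: on the line, many short bursts of length b are never worse in expectation than fewer bursts of length kb, for the same total number of steps.) -/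
/-!
A walk of length `m + n` is a walk `a` of length `m` followed by a walk `c` of length `n`, and each
of its partial sums is a partial sum of `a` plus one of `c`; so its maximum is at most
`walkMax a + walkMax c`. Summing over all `2 ^ (m + n)` walks, the expected maximum is subadditive
in the length, and the theorem is its `k`-fold iterate.
-/

open Finset

lemma partialSum_min {n : ℕ} (ε : Fin n → Bool) (t : ℕ) :
    partialSum ε (min t n) = partialSum ε t := by
  unfold partialSum
  refine sum_congr rfl fun i _ => ?_
  simp only [lt_min_iff, i.isLt, and_true]

lemma partialSum_le_walkMax {n : ℕ} (ε : Fin n → Bool) (t : ℕ) :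
    partialSum ε t ≤ walkMax ε := by
  rw [← partialSum_min]
  exact le_sup' (partialSum ε) (mem_range.mpr (Nat.lt_succ_of_le (min_le_right t n)))

lemma walkMax_nonneg {n : ℕ} (ε : Fin n → Bool) : 0 ≤ walkMax ε := by
  simpa [partialSum] using partialSum_le_walkMax ε 0

lemma walkMax_le_length {n : ℕ} (ε : Fin n → Bool) : walkMax ε ≤ n := by
  refine sup'_le _ _ fun t _ => ?_
  calc partialSum ε t ≤ ∑ _i : Fin n, (1 : ℤ) :=
        sum_le_sum fun i _ => by unfold stepVal; split_ifs <;> omega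
    _ = n := by simp

lemma partialSum_append {m n : ℕ} (a : Fin m → Bool) (c : Fin n → Bool) (t : ℕ) :
    partialSum (Fin.append a c) t = partialSum a t + partialSum c (t - m) := by
  simp only [partialSum, Fin.sum_univ_add, Fin.append_left, Fin.append_right,
    Fin.val_castAdd, Fin.val_natAdd, lt_tsub_iff_left]

lemma walkMax_append_le {m n : ℕ} (a : Fin m → Bool) (c : Fin n → Bool) :
    walkMax (Fin.append a c) ≤ walkMax a + walkMax c :=
  sup'_le _ _ fun t _ => partialSum_append a c t ▸
    add_le_add (partialSum_le_walkMax a t) (partialSum_le_walkMax c (t - m))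

def expectedMax (n : ℕ) : ℚ :=
  (∑ ε : Fin n → Bool, (walkMax ε : ℚ)) / 2 ^ n

lemma sum_mul_f_eq_sum_walkMax (n : ℕ) :
    ∑ m ∈ range (n + 1), (m : ℚ) * (f m n : ℚ) =
      ∑ ε : Fin n → Bool, (walkMax ε : ℚ) := by
  have hmaps : ∀ ε ∈ (univ : Finset (Fin n → Bool)), (walkMax ε).toNat ∈ range (n + 1) :=
    fun ε _ => mem_range.mpr (by have := walkMax_le_length ε; omega)
  rw [← sum_fiberwise_of_maps_to hmaps]
  refine sum_congr rfl fun m _ => ?_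
  have hfiber : univ.filter (fun ε : Fin n → Bool => (walkMax ε).toNat = m)
      = univ.filter (fun ε => walkMax ε = m) :=
    filter_congr fun ε _ => by have := walkMax_nonneg ε; omega
  rw [hfiber, sum_congr rfl fun ε hε => by rw [(mem_filter.mp hε).2], sum_const, nsmul_eq_mul,
    mul_comm, f]
  norm_cast

lemma expectedMax_add_le (m n : ℕ) :
    expectedMax (m + n) ≤ expectedMax m + expectedMax n := by
  have hsum : ∑ ε : Fin (m + n) → Bool, (walkMax ε : ℚ)
      ≤ 2 ^ n * ∑ a : Fin m → Bool, (walkMax a : ℚ) +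
        2 ^ m * ∑ c : Fin n → Bool, (walkMax c : ℚ) :=
    calc ∑ ε : Fin (m + n) → Bool, (walkMax ε : ℚ)
        = ∑ p : (Fin m → Bool) × (Fin n → Bool), (walkMax (Fin.append p.1 p.2) : ℚ) :=
          (Fintype.sum_equiv (Fin.appendEquiv m n) _ _ fun _ => rfl).symm
      _ ≤ ∑ p : (Fin m → Bool) × (Fin n → Bool), ((walkMax p.1 : ℚ) + walkMax p.2) :=
          sum_le_sum fun p _ => mod_cast walkMax_append_le p.1 p.2
      _ = _ := by
          simp [Fintype.sum_prod_type, sum_add_distrib, ← sum_mul, mul_comm]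
  unfold expectedMax
  rw [div_add_div _ _ (by positivity) (by positivity), pow_add,
    div_le_div_iff_of_pos_right (by positivity)]
  linarith

lemma expectedMax_mul_le (k b : ℕ) : expectedMax (k * b) ≤ k * expectedMax b := by
  induction k with
  | zero => simp [expectedMax, walkMax, partialSum]
  | succ k ih =>
    calc expectedMax ((k + 1) * b) ≤ expectedMax (k * b) + expectedMax b := by
          rw [Nat.succ_mul]; exact expectedMax_add_le _ _
      _ ≤ (k + 1 : ℕ) * expectedMax b := by push_cast; linarith

theorem shorter_bursts_better_general (b k : ℕ) :
    (∑ m ∈ Finset.range (k * b + 1), (m : ℚ) * (f m (k * b) : ℚ)) / 2 ^ (k * b)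
      ≤ (k : ℚ) * ((∑ m ∈ Finset.range (b + 1), (m : ℚ) * (f m b : ℚ)) / 2 ^ b) := by
  rw [sum_mul_f_eq_sum_walkMax, sum_mul_f_eq_sum_walkMax]
  exact expectedMax_mul_le k b

/-- Many short bursts are never worse in expectation than fewer long bursts: for
positive integers `b` and `k`, the expected maximum of a uniformly random ±1-step walk
of length `k·b` is at most `k` times the expected maximum of a walk of length `b`. -/
theorem shorter_bursts_better (b k : ℕ) (hb : 0 < b) (hk : 0 < k) :
    (∑ m ∈ Finset.range (k * b + 1), (m : ℚ) * (f m (k * b) : ℚ)) / 2 ^ (k * b)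
      ≤ (k : ℚ) * ((∑ m ∈ Finset.range (b + 1), (m : ℚ) * (f m b : ℚ)) / 2 ^ b) :=
  shorter_bursts_better_general b k
end
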